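/- Consider guessing a bit B ~ Bernoulli(1/2) from a single observation y, where y ~ P if B = 0 and y ~ Q if B = 1, and T_{P,Q} = f is a trade-off function. The minimum achievable error probability over all (possibly randomized) decoders equals (α* + f(α*))/2, where α* ∈ (0,1) is any point at which −1 is a subgradient of f; this minimum is achieved by the maximum-likelihood rule that guesses 0 when P(y)/Q(y) ≥ 1 and 1 otherwise. -/

import Mathlib

open MeasureTheory Set
open scoped NNReal ENNReal

/-- The trade-off function of a pair of measures. -/
noncomputable def tradeOff {Y : Type*} [MeasurableSpace Y] (P Q : Measure Y) (α : ℝ) : ℝ :=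
  sInf {β : ℝ | ∃ R : Y → ℝ, Measurable R ∧
    (∀ y, R y ∈ Icc (0:ℝ) 1) ∧ (∫ y, R y ∂P) ≤ α ∧ β = ∫ y, (1 - R y) ∂Q}

/-- Error probability of a randomized decoder `D` (where `D y` is the
probability of guessing `1` on observation `y`) for a uniform bit `B` with
`y ∼ P` when `B = 0` and `y ∼ Q` when `B = 1`. -/
noncomputable def decoderError {Y : Type*} [MeasurableSpace Y]
    (P Q : Measure Y) (D : Y → ℝ) : ℝ :=
  (1/2) * (∫ y, D y ∂P) + (1/2) * (∫ y, (1 - D y) ∂Q)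

/-- the minimum error probability over all randomized decoders of a
uniform bit observed through `(P,Q)` with trade-off function `f = T_{P,Q}` equals
`(α* + f α*)/2` where `-1` is a subgradient of `f` at `α* ∈ (0,1)`; it is
achieved by the maximum-likelihood rule. -/
theorem bayes_error_f_dp_channel
    {Y : Type*} [MeasurableSpace Y]
    (μ : Measure Y) [SigmaFinite μ] (p q : Y → ℝ)
    (hp : Measurable p) (hq : Measurable q)
    (hp0 : ∀ y, 0 ≤ p y) (hq0 : ∀ y, 0 ≤ q y)
    (P Q : Measure Y)
    (hP : P = μ.withDensity (fun y => ENNReal.ofReal (p y)))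
    (hQ : Q = μ.withDensity (fun y => ENNReal.ofReal (q y)))
    [IsProbabilityMeasure P] [IsProbabilityMeasure Q]
    (f : ℝ → ℝ) (hf : ∀ α, f α = tradeOff P Q α)
    (αopt : ℝ) (hαopt : αopt ∈ Ioo (0:ℝ) 1)
    (hsub : ∀ x ∈ Icc (0:ℝ) 1, f αopt + (-1) * (x - αopt) ≤ f x) :
    IsLeast {e : ℝ | ∃ D : Y → ℝ, Measurable D ∧ (∀ y, D y ∈ Icc (0:ℝ) 1) ∧
        e = decoderError P Q D}
      ((αopt + f αopt) / 2) ∧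
    decoderError P Q (fun y => if q y ≤ p y then 0 else 1)
      = (αopt + f αopt) / 2 := by
  obtain ⟨hα0, hα1⟩ := hαopt
  -- transfer integrals over P and Q to integrals over μ
  have htrans : ∀ (d : Y → ℝ), Measurable d → (∀ y, 0 ≤ d y) →
      ∀ (g : Y → ℝ), Measurable g →
      ∫ y, g y ∂(μ.withDensity (fun y => ENNReal.ofReal (d y))) = ∫ y, d y * g y ∂μ := by
    intro d hd hd0 g hg
    have h1 : (fun y => ENNReal.ofReal (d y))
        = fun y => (((fun y => (d y).toNNReal) y : ℝ≥0) : ℝ≥0∞) := rfl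
    rw [h1, integral_withDensity_eq_integral_smul hd.real_toNNReal g]
    congr 1; funext y
    simp [NNReal.smul_def, Real.coe_toNNReal _ (hd0 y)]
  have htransP : ∀ (g : Y → ℝ), Measurable g → ∫ y, g y ∂P = ∫ y, p y * g y ∂μ := by
    intro g hg; rw [hP]; exact htrans p hp hp0 g hg
  have htransQ : ∀ (g : Y → ℝ), Measurable g → ∫ y, g y ∂Q = ∫ y, q y * g y ∂μ := by
    intro g hg; rw [hQ]; exact htrans q hq hq0 g hg
  -- integrability of densities
  have hdensInt : ∀ (d : Y → ℝ), Measurable d → (∀ y, 0 ≤ d y) →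
      (μ.withDensity (fun y => ENNReal.ofReal (d y))) Set.univ = 1 →
      Integrable d μ := by
    intro d hd hd0 huniv
    rw [withDensity_apply _ MeasurableSet.univ, setLIntegral_univ] at huniv
    refine ⟨hd.aestronglyMeasurable, ?_⟩
    rw [hasFiniteIntegral_iff_norm]
    have h2 : ∀ y, ENNReal.ofReal ‖d y‖ = ENNReal.ofReal (d y) := fun y => by
      rw [Real.norm_of_nonneg (hd0 y)]
    simp_rw [h2, huniv]
    exact ENNReal.one_lt_top
  have hpInt : Integrable p μ := hdensInt p hp hp0 (by rw [← hP]; exact measure_univ)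
  have hqInt : Integrable q μ := hdensInt q hq hq0 (by rw [← hQ]; exact measure_univ)
  -- integrability of density times bounded function
  have hmulInt : ∀ (d r : Y → ℝ), Integrable d μ → (∀ y, 0 ≤ d y) →
      Measurable r → (∀ y, r y ∈ Icc (0:ℝ) 1) → Integrable (fun y => d y * r y) μ := by
    intro d r hd hd0 hr hr01
    refine Integrable.mono' hd (hd.aestronglyMeasurable.mul hr.aestronglyMeasurable)
      (ae_of_all _ fun y => ?_)
    rw [Real.norm_of_nonneg (mul_nonneg (hd0 y) (hr01 y).1)]
    nlinarith [(hr01 y).2, hd0 y]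
  -- the ML decoder
  set D₀ : Y → ℝ := fun y => if q y ≤ p y then 0 else 1 with hD₀def
  have hD₀meas : Measurable D₀ :=
    Measurable.ite (measurableSet_le hq hp) measurable_const measurable_const
  have hD₀01 : ∀ y, D₀ y ∈ Icc (0:ℝ) 1 := fun y => by
    by_cases h : q y ≤ p y <;> simp [D₀, h]
  -- core optimality of the ML decoder among all tests
  have hcore : ∀ (R : Y → ℝ), Measurable R → (∀ y, R y ∈ Icc (0:ℝ) 1) →
      (∫ y, D₀ y ∂P) + (∫ y, (1 - D₀ y) ∂Q)
        ≤ (∫ y, R y ∂P) + (∫ y, (1 - R y) ∂Q) := by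
    intro R hR hR01
    have h1R : ∀ (r : Y → ℝ), (∀ y, r y ∈ Icc (0:ℝ) 1) → ∀ y, (1 - r y) ∈ Icc (0:ℝ) 1 := by
      intro r hr y; constructor <;> [linarith [(hr y).2]; linarith [(hr y).1]]
    rw [htransP D₀ hD₀meas, htransP R hR,
        htransQ (fun y => 1 - D₀ y) (measurable_const.sub hD₀meas),
        htransQ (fun y => 1 - R y) (measurable_const.sub hR)]
    have iA := hmulInt p D₀ hpInt hp0 hD₀meas hD₀01
    have iB := hmulInt q (fun y => 1 - D₀ y) hqInt hq0 (measurable_const.sub hD₀meas) (h1R D₀ hD₀01)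
    have iC := hmulInt p R hpInt hp0 hR hR01
    have iD := hmulInt q (fun y => 1 - R y) hqInt hq0 (measurable_const.sub hR) (h1R R hR01)
    rw [← integral_add iA iB, ← integral_add iC iD]
    refine integral_mono (iA.add iB) (iC.add iD) fun y => ?_
    by_cases h : q y ≤ p y
    · simp only [D₀, h, if_pos]
      nlinarith [(hR01 y).1, (hR01 y).2, hp0 y, hq0 y]
    · simp only [D₀, h, if_neg, not_false_iff]
      push_neg at h
      nlinarith [(hR01 y).1, (hR01 y).2, hp0 y, hq0 y]
  -- lower bound on any test
  have hLB : ∀ (R : Y → ℝ), Measurable R → (∀ y, R y ∈ Icc (0:ℝ) 1) →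
      αopt + f αopt ≤ (∫ y, R y ∂P) + (∫ y, (1 - R y) ∂Q) := by
    intro R hR hR01
    have hRint : Integrable R P :=
      Integrable.mono' (integrable_const 1) hR.aestronglyMeasurable
        (ae_of_all _ fun y => by rw [Real.norm_of_nonneg (hR01 y).1]; exact (hR01 y).2)
    set α := ∫ y, R y ∂P with hα
    have hα01 : α ∈ Icc (0:ℝ) 1 := by
      constructor
      · exact integral_nonneg fun y => (hR01 y).1
      · calc ∫ y, R y ∂P ≤ ∫ _, (1:ℝ) ∂P :=
            integral_mono hRint (integrable_const 1) (fun y => (hR01 y).2)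
          _ = 1 := by simp
    have hfα : f α ≤ ∫ y, (1 - R y) ∂Q := by
      rw [hf]
      apply csInf_le
      · refine ⟨0, ?_⟩
        rintro β ⟨R', _, hR'01, _, rfl⟩
        exact integral_nonneg fun y => by have := (hR'01 y).2; simp only [Pi.zero_apply]; linarith
      · exact ⟨R, hR, hR01, le_refl _, rfl⟩
    have := hsub α hα01
    linarith
  -- upper bound for the ML decoder
  have hUB : (∫ y, D₀ y ∂P) + (∫ y, (1 - D₀ y) ∂Q) ≤ αopt + f αopt := by
    have h1 : (∫ y, D₀ y ∂P) + (∫ y, (1 - D₀ y) ∂Q) - αopt ≤ tradeOff P Q αopt := by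
      apply le_csInf
      · exact ⟨∫ y, (1 - (fun _ => (0:ℝ)) y) ∂Q, fun _ => 0, measurable_const,
          fun y => by simp, by simp [le_of_lt hα0], rfl⟩
      · rintro β ⟨R, hR, hR01, hRα, rfl⟩
        have := hcore R hR hR01
        linarith
    rw [hf]; linarith
  have hval : decoderError P Q D₀ = (αopt + f αopt) / 2 := by
    have h1 := hLB D₀ hD₀meas hD₀01
    unfold decoderError
    linarith
  refine ⟨⟨⟨D₀, hD₀meas, hD₀01, hval.symm⟩, ?_⟩, hval⟩
  rintro e ⟨D, hD, hD01, rfl⟩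
  have := hLB D hD hD01
  unfold decoderError
  linarith
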